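/- arXiv:2408.02163 — 3 statements merged into one kernel-verified Lean document; each statement's English description precedes it below -/
import Mathlib

section
/- Let p be an odd prime and define a(j) for positive integers j by: a(j) = p^{k+1} if j = 2(p-1)p^k r - 1 with r not divisible by p and k ≥ 0, and a(j) = 1 otherwise (with a(j) interpreted as the order of π_j L_{K(1)} S^0 in positive degrees). Then for every n ≥ 0, (1/(2(p-1)p^n)) · ∑_{j=1}^{2(p-1)p^n} (-1)^j a(j) = -(1+n)/2. -/
/-- The order of `π_j L_{K(1)} S⁰` for `j ≥ 1` (at the odd prime `p`):
`p^(k+1)` if `j = 2(p-1)p^k r - 1` with `p ∤ r`, and `1` otherwise.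
Equivalently, `j+1 = 2(p-1)·m` for some `m ≥ 1`, and then `k = v_p(m)`. -/
def K1SphereOrder (p j : ℕ) : ℕ :=
  if 2 * (p - 1) ∣ (j + 1) then p ^ (padicValNat p ((j + 1) / (2 * (p - 1))) + 1) else 1

/-!
Write `d = 2(p-1)`. A degree `j` with `a(j) ≠ 1` has `d ∣ j + 1`, so `j` is odd, and
`(-1)^j a(j) = (-1)^j - (a(j) - 1)`. The alternating sum of `1`s over the even range vanishes,
and the corrections, indexed by `m = (j + 1)/d ∈ [1, p^n]`, add up to
`∑ (p^(v_p(m)+1) - 1) = (p - 1) ∑_{i ≤ n} p^i · #{m ≤ p^n : p^i ∣ m}`,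
which is `(n + 1)(p - 1)p^n`.
-/

open Finset

section PadicCount

variable {R : Type*} [CommRing R] {p : ℕ} [hp : Fact p.Prime]

lemma padicValNat_le_of_le_pow {m n : ℕ} (hm : m ≠ 0) (hmn : m ≤ p ^ n) :
    padicValNat p m ≤ n :=
  (Nat.pow_le_pow_iff_right hp.out.one_lt).mp
    ((Nat.le_of_dvd (Nat.pos_of_ne_zero hm) pow_padicValNat_dvd).trans hmn)

lemma pow_padicValNat_add_one_sub_one {m n : ℕ} (hm : m ≠ 0) (hmn : m ≤ p ^ n) :
    (p : R) ^ (padicValNat p m + 1) - 1 =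
      (p - 1) * ∑ i ∈ range (n + 1), if p ^ i ∣ m then (p : R) ^ i else 0 := by
  have hdvd : {i ∈ range (n + 1) | p ^ i ∣ m} = range (padicValNat p m + 1) := by
    have := padicValNat_le_of_le_pow hm hmn
    ext i
    simp only [mem_filter, mem_range, padicValNat_dvd_iff_le hm]
    omega
  rw [← sum_filter, hdvd, mul_comm, geom_sum_mul]

lemma sum_Icc_ite_pow_dvd {i n : ℕ} (hi : i ≤ n) :
    ∑ m ∈ Icc 1 (p ^ n), (if p ^ i ∣ m then (p : R) ^ i else 0) = (p : R) ^ n := by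
  rw [← sum_filter, sum_const, nsmul_eq_mul, ← zero_add 1, Icc_add_one_left_eq_Ioc,
    Nat.Ioc_filter_dvd_card_eq_div, Nat.pow_div hi hp.out.pos, Nat.cast_pow, ← pow_add,
    Nat.sub_add_cancel hi]

theorem sum_Icc_pow_padicValNat_add_one_sub_one (n : ℕ) :
    ∑ m ∈ Icc 1 (p ^ n), ((p : R) ^ (padicValNat p m + 1) - 1) = (n + 1) * (p - 1) * p ^ n := by
  calc _ = ∑ m ∈ Icc 1 (p ^ n),
        (p - 1) * ∑ i ∈ range (n + 1), if p ^ i ∣ m then (p : R) ^ i else 0 :=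
        sum_congr rfl fun m hm ↦
          pow_padicValNat_add_one_sub_one (by rw [mem_Icc] at hm; omega) (mem_Icc.mp hm).2
    _ = (p - 1) * ∑ i ∈ range (n + 1), ∑ m ∈ Icc 1 (p ^ n),
        if p ^ i ∣ m then (p : R) ^ i else 0 := by
        rw [← mul_sum, sum_comm]
    _ = (n + 1) * (p - 1) * p ^ n := by
        rw [sum_congr rfl fun i hi ↦ sum_Icc_ite_pow_dvd (Nat.lt_succ_iff.mp (mem_range.mp hi)),
          sum_const, card_range, nsmul_eq_mul]
        push_cast
        ring

end PadicCount

lemma sum_Icc_neg_one_pow_of_even {R : Type*} [Ring R] {N : ℕ} (hN : Even N) :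
    ∑ j ∈ Icc 1 N, (-1 : R) ^ j = 0 := by
  rw [← Ico_add_one_right_eq_Icc, sum_Ico_eq_sum_range, Nat.add_sub_cancel]
  simp only [pow_add, pow_one, neg_one_mul]
  rw [sum_neg_distrib, neg_one_geom_sum, if_pos hN, neg_zero]

lemma sum_Icc_ite_dvd_add_one {M : Type*} [AddCommMonoid M] (f : ℕ → M) {d : ℕ} (hd : 2 ≤ d)
    (N : ℕ) :
    ∑ j ∈ Icc 1 (d * N), (if d ∣ j + 1 then f ((j + 1) / d) else 0) =
      ∑ m ∈ Icc 1 N, f m := by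
  rw [← sum_filter]
  refine sum_nbij' (fun j ↦ (j + 1) / d) (fun m ↦ d * m - 1) ?_ ?_ ?_ ?_ fun _ _ ↦ rfl
  · rintro j hj
    simp only [mem_filter, mem_Icc] at hj ⊢
    obtain ⟨⟨hj1, hjN⟩, m, hm⟩ := hj
    rw [hm, Nat.mul_div_cancel_left _ (by omega)]
    constructor
    · nlinarith
    · nlinarith
  · rintro m hm
    simp only [mem_filter, mem_Icc] at hm ⊢
    have : d ≤ d * m := Nat.le_mul_of_pos_right d hm.1
    have : d * m ≤ d * N := Nat.mul_le_mul_left d hm.2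
    exact ⟨⟨by omega, by omega⟩, ⟨m, by omega⟩⟩
  · rintro j hj
    have := Nat.mul_div_cancel' (mem_filter.mp hj).2
    omega
  · rintro m hm
    have : d ≤ d * m := Nat.le_mul_of_pos_right d (mem_Icc.mp hm).1
    rw [Nat.sub_add_cancel (by omega), Nat.mul_div_cancel_left _ (by omega)]

lemma neg_one_pow_mul_K1SphereOrder {R : Type*} [CommRing R] (p j : ℕ) :
    (-1 : R) ^ j * K1SphereOrder p j = (-1) ^ j -
      if 2 * (p - 1) ∣ j + 1 then (p : R) ^ (padicValNat p ((j + 1) / (2 * (p - 1))) + 1) - 1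
      else 0 := by
  unfold K1SphereOrder
  split_ifs with h
  · obtain ⟨k, hk⟩ := (dvd_mul_right 2 (p - 1)).trans h
    rw [(show Odd j from ⟨k - 1, by omega⟩).neg_one_pow]
    push_cast
    ring
  · simp

theorem statement2_general (p : ℕ) (hp : p.Prime) (n : ℕ) :
    (∑ j ∈ Finset.Icc 1 (2 * (p - 1) * p ^ n), (-1 : ℚ) ^ j * (K1SphereOrder p j : ℚ)) /
      ((2 * (p - 1) * p ^ n : ℕ) : ℚ) = -(1 + (n : ℚ)) / 2 := by
  have := Fact.mk hp
  have hd : 2 ≤ 2 * (p - 1) := by have := hp.two_le; omega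
  have hsum : ∑ j ∈ Icc 1 (2 * (p - 1) * p ^ n), (-1 : ℚ) ^ j * K1SphereOrder p j =
      -((n + 1) * (p - 1) * p ^ n) := by
    rw [sum_congr rfl fun j _ ↦ neg_one_pow_mul_K1SphereOrder p j, sum_sub_distrib,
      sum_Icc_neg_one_pow_of_even ((even_two_mul _).mul_right _),
      sum_Icc_ite_dvd_add_one (fun m ↦ (p : ℚ) ^ (padicValNat p m + 1) - 1) hd,
      sum_Icc_pow_padicValNat_add_one_sub_one, zero_sub]
  have hp1 : (p : ℚ) - 1 ≠ 0 := sub_ne_zero.mpr (by exact_mod_cast hp.one_lt.ne')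
  have hpn : (p : ℚ) ^ n ≠ 0 := pow_ne_zero _ (by exact_mod_cast hp.ne_zero)
  rw [hsum]
  push_cast [Nat.cast_sub hp.one_le]
  field_simp
  ring

/-- The graded average of the orders of the first `2(p-1)p^n` positive-degree
`K(1)`-local stable stems of the sphere equals `-(1+n)/2`. -/
theorem statement2 (p : ℕ) (hp : p.Prime) (hodd : Odd p) (n : ℕ) :
    (∑ j ∈ Finset.Icc 1 (2 * (p - 1) * p ^ n), (-1 : ℚ) ^ j * (K1SphereOrder p j : ℚ)) /
      ((2 * (p - 1) * p ^ n : ℕ) : ℚ) = -(1 + (n : ℚ)) / 2 :=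
  statement2_general p hp n
end

section
/- Let p be an odd prime and a(j) as above. Then lim_{n→∞} a(n)/(n·log_p(n)) = 0; that is, the orders of the positive-degree homotopy groups of the K(1)-local sphere grow more slowly than n·log_p(n). -/
open Filter Real

/-- The orders of the positive-degree homotopy groups of the `K(1)`-local sphere
grow more slowly than `n·log_p(n)`: `a(n)/(n log_p n) → 0`. -/
theorem statement4 (p : ℕ) (hp : p.Prime) (hodd : Odd p) :
    Tendsto (fun n : ℕ => (K1SphereOrder p n : ℝ) / (n * Real.logb p n)) atTop (nhds 0) := by
  have hp3 : 3 ≤ p := by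
    rcases hp.two_le.lt_or_eq with h | h
    · omega
    · exact absurd hodd (by rw [← h]; decide)
  -- key bound: K1SphereOrder p n ≤ p * (n + 1)
  have key : ∀ n : ℕ, (K1SphereOrder p n : ℕ) ≤ p * (n + 1) := by
    intro n
    unfold K1SphereOrder
    split_ifs with h
    · set m := (n + 1) / (2 * (p - 1)) with hm
      have hd : 4 ≤ 2 * (p - 1) := by omega
      have hmpos : 0 < m := Nat.div_pos (Nat.le_of_dvd (Nat.succ_pos n) h) (by omega)
      have h1 : p ^ padicValNat p m ≤ m :=
        Nat.le_of_dvd hmpos pow_padicValNat_dvd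
      have h2 : m ≤ n + 1 := Nat.div_le_self _ _
      calc p ^ (padicValNat p m + 1) = p * p ^ padicValNat p m := by ring
        _ ≤ p * (n + 1) := Nat.mul_le_mul_left p (h1.trans h2)
    · nlinarith
  have hb : (1 : ℝ) < p := by exact_mod_cast by omega
  -- bound function tends to 0
  have hlog : Tendsto (fun n : ℕ => Real.logb p n) atTop atTop :=
    (Real.tendsto_logb_atTop hb).comp tendsto_natCast_atTop_atTop
  have hg : Tendsto (fun n : ℕ => (2 * p : ℝ) / Real.logb p n) atTop (nhds 0) :=
    Tendsto.div_atTop tendsto_const_nhds hlog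
  apply squeeze_zero' ?_ ?_ hg
  · filter_upwards [eventually_ge_atTop 2] with n hn
    have hnp : (0 : ℝ) < n := by positivity
    have hlogpos : 0 < Real.logb p n := Real.logb_pos hb (by exact_mod_cast by omega)
    positivity
  · filter_upwards [eventually_ge_atTop 2] with n hn
    have hnp : (0 : ℝ) < n := by exact_mod_cast by omega
    have hlogpos : 0 < Real.logb p n := Real.logb_pos hb (by exact_mod_cast by omega)
    rw [div_le_div_iff₀ (by positivity) hlogpos]
    have h1 : (K1SphereOrder p n : ℝ) ≤ p * (n + 1) := by exact_mod_cast key n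
    have h2 : (p : ℝ) * (n + 1) ≤ 2 * p * n := by
      have : (1 : ℝ) ≤ n := by exact_mod_cast by omega
      nlinarith [hb.le]
    nlinarith
end

section
/- Let p be an odd prime and i, j, n integers with n ≡ 1 - j (mod p-1) and i ≡ j (mod p-1), and let f_{i,j}(T) = T - (1+p)^i + 1 ∈ ℤ_p[T]. Write n + i - 1 = p^k r with p ∤ r (assuming n + i ≠ 1). Then v_p(f_{i,j}((1+p)^{1-n} - 1)) = k + 1. -/
/-!
Write `u = 1 + p` and `m = n + i - 1`. Since `u` is a `p`-adic unit,
`(u ^ (1 - n) - 1) - u ^ i + 1 = -u ^ (1 - n) * (u ^ m - 1)` has the valuation of `u ^ m - 1`,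
and replacing `m` by `-m` only multiplies `u ^ m - 1` by the unit `-u ^ m`. For `m > 0`,
lifting the exponent (`p` odd, `p ∣ u - 1`) gives `v_p(u ^ m - 1) = v_p(u - 1) + v_p(m) = 1 + k`.
-/

theorem Nat.Prime.not_dvd_one_add_self {p : ℕ} (hp : p.Prime) : ¬ p ∣ 1 + p := fun h =>
  hp.one_lt.ne' (Nat.dvd_one.mp ((Nat.dvd_add_left dvd_rfl).mp h))

namespace Padic

variable {p : ℕ} [Fact p.Prime]

theorem valuation_neg (x : ℚ_[p]) : (-x).valuation = x.valuation := by
  rcases eq_or_ne x 0 with rfl | hx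
  · simp
  rw [neg_eq_neg_one_mul, valuation_mul (by norm_num) hx, ← Int.cast_one, ← Int.cast_neg,
    valuation_intCast]
  simp [Int.natCast_dvd, (Fact.out : p.Prime).ne_one]

theorem valuation_one_add_self : (1 + (p : ℚ_[p])).valuation = 0 := by
  rw [← Nat.cast_one, ← Nat.cast_add, valuation_natCast,
    padicValNat.eq_zero_of_not_dvd (Fact.out : p.Prime).not_dvd_one_add_self, Nat.cast_zero]

theorem valuation_one_add_self_pow_sub_one (hp : Odd p) {N : ℕ} (hN : N ≠ 0) :
    ((1 + (p : ℚ_[p])) ^ N - 1).valuation = padicValNat p N + 1 := by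
  have hLTE := padicValNat.pow_sub_pow (y := 1) hp (by simp [(Fact.out : p.Prime).pos])
    (by simp) (Fact.out : p.Prime).not_dvd_one_add_self hN
  rw [one_pow, Nat.add_sub_cancel_left, padicValNat_self] at hLTE
  have hle : 1 ≤ (1 + p) ^ N := Nat.one_le_pow _ _ (by omega)
  rw [← Nat.cast_one, ← Nat.cast_add, ← Nat.cast_pow, ← Nat.cast_sub hle, valuation_natCast,
    hLTE]
  push_cast
  ring

theorem one_add_self_ne_zero : (1 + (p : ℚ_[p])) ≠ 0 := by
  norm_cast
  omega

theorem valuation_one_add_self_zpow_mul (a : ℤ) (y : ℚ_[p]) :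
    ((1 + (p : ℚ_[p])) ^ a * y).valuation = y.valuation := by
  rcases eq_or_ne y 0 with rfl | hy
  · simp
  rw [valuation_mul (zpow_ne_zero _ one_add_self_ne_zero) hy, valuation_zpow,
    valuation_one_add_self, mul_zero, zero_add]

theorem valuation_one_add_self_zpow_sub_one (hp : Odd p) {m : ℤ} (hm : m ≠ 0) :
    ((1 + (p : ℚ_[p])) ^ m - 1).valuation = padicValInt p m + 1 := by
  obtain ⟨N, rfl | rfl⟩ := m.eq_nat_or_neg
  · rw [zpow_natCast, valuation_one_add_self_pow_sub_one hp (by omega), padicValInt.of_nat]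
  have hfactor : (1 + (p : ℚ_[p])) ^ (-(N : ℤ)) - 1
      = -((1 + (p : ℚ_[p])) ^ (-(N : ℤ)) * ((1 + (p : ℚ_[p])) ^ N - 1)) := by
    rw [zpow_neg, zpow_natCast]
    field_simp [one_add_self_ne_zero]
    ring
  rw [hfactor, valuation_neg, valuation_one_add_self_zpow_mul,
    valuation_one_add_self_pow_sub_one hp (by omega), padicValInt, Int.natAbs_neg,
    Int.natAbs_natCast]

end Padic

theorem padicValInt_prime_pow_mul {p : ℕ} [Fact p.Prime] (k : ℕ) {r : ℤ}
    (hr : ¬ (p : ℤ) ∣ r) :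
    padicValInt p ((p : ℤ) ^ k * r) = k := by
  have hr0 : r ≠ 0 := by rintro rfl; exact hr (dvd_zero _)
  rw [padicValInt.mul (pow_ne_zero _ (by exact_mod_cast (Fact.out : p.Prime).ne_zero)) hr0,
    padicValInt.eq_zero_of_not_dvd hr, ← Nat.cast_pow, padicValInt.of_nat, padicValNat.prime_pow,
    add_zero]

theorem statement8_general (p : ℕ) [Fact p.Prime] (hp : Odd p) (i n : ℤ)
    (k : ℕ) (r : ℤ) (hr : ¬ (p : ℤ) ∣ r) (hkr : n + i - 1 = (p : ℤ) ^ k * r) :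
    (((1 + (p : ℚ_[p])) ^ (1 - n) - 1) - (1 + (p : ℚ_[p])) ^ i + 1).valuation
      = (k : ℤ) + 1 := by
  set u : ℚ_[p] := 1 + (p : ℚ_[p])
  have hm : n + i - 1 ≠ 0 := by
    rw [hkr]
    exact mul_ne_zero (pow_ne_zero _ (mod_cast (Fact.out : p.Prime).ne_zero))
      fun h => hr (h ▸ dvd_zero _)
  have hfactor : (u ^ (1 - n) - 1) - u ^ i + 1 = -(u ^ (1 - n) * (u ^ (n + i - 1) - 1)) := by
    have hsplit : u ^ i = u ^ (1 - n) * u ^ (n + i - 1) := by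
      rw [← zpow_add₀ Padic.one_add_self_ne_zero]
      congr 1
      ring
    rw [hsplit]
    ring
  rw [hfactor, Padic.valuation_neg, Padic.valuation_one_add_self_zpow_mul,
    Padic.valuation_one_add_self_zpow_sub_one hp hm, hkr, padicValInt_prime_pow_mul k hr]

/-- Let `p` be an odd prime, `n ≡ 1-j (mod p-1)`, `i ≡ j (mod p-1)`, and
`f_{i,j}(T) = T - (1+p)^i + 1`.  If `n + i - 1 = p^k r` with `p ∤ r`, then
`v_p(f_{i,j}((1+p)^{1-n} - 1)) = k + 1` (this is the `p`-adic valuation of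
`|π_{2(n+i-1)-1} L_{K(1)} S⁰|`). -/
theorem statement8 (p : ℕ) [Fact p.Prime] (hp : Odd p) (i j n : ℤ)
    (hn : ((p : ℤ) - 1) ∣ (n - (1 - j))) (hi : ((p : ℤ) - 1) ∣ (i - j))
    (k : ℕ) (r : ℤ) (hr : ¬ (p : ℤ) ∣ r) (hkr : n + i - 1 = (p : ℤ) ^ k * r) :
    (((1 + (p : ℚ_[p])) ^ (1 - n) - 1) - (1 + (p : ℚ_[p])) ^ i + 1).valuation
      = (k : ℤ) + 1 :=
  statement8_general p hp i n k r hr hkr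
end
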